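/- Let a, b ∈ SL₂(ℝ) be hyperbolic elements with disjoint translation axes in the same direction, and let d > 0 be the distance between their axes. Then τ_a + τ_b < τ_{ab} ≤ τ_a + τ_b + 2d, where τ_g = 2 log λ₁(g) is the translation length. -/

import Mathlib

open Matrix UpperHalfPlane
open scoped MatrixGroups

/-- The translation length of `g ∈ SL(2,ℝ)` acting on the hyperbolic plane:
the infimum of the displacement `dist (g • z) z`. -/
noncomputable def transLen (g : SL(2, ℝ)) : ℝ := ⨅ z : ℍ, dist (g • z) z

/-- The translation axis of `g`: the set of points realizing the minimal displacement. -/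
noncomputable def axisSet (g : SL(2, ℝ)) : Set ℍ := {z : ℍ | dist (g • z) z = transLen g}

/-- The distance between the translation axes of `a` and `b`. -/
noncomputable def axisDist (a b : SL(2, ℝ)) : ℝ :=
  ⨅ (x : axisSet a) (y : axisSet b), dist (x : ℍ) (y : ℍ)

/-- `g` is a hyperbolic isometry iff `|tr g| > 2`. -/
def IsHyperbolic (g : SL(2, ℝ)) : Prop := 2 < |Matrix.trace (g : Matrix (Fin 2) (Fin 2) ℝ)|

/-- Determinant of two vectors in the plane. -/
def det2 (u v : Fin 2 → ℝ) : ℝ := u 0 * v 1 - u 1 * v 0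

/-- Positive cyclic orientation of three points of the circle `ℙ¹(ℝ) = ∂ℍ`, represented by
nonzero vectors of `ℝ²`; this is independent of the choice of representatives. -/
def posOrient (u v w : Fin 2 → ℝ) : Prop := 0 < det2 u v * det2 v w * det2 w u

/-- Four points of the circle `ℙ¹(ℝ)`, given by vector representatives, are cyclically
ordered in the order `(u, v, w, z)` (for one of the two orientations). -/
def cyc4 (u v w z : Fin 2 → ℝ) : Prop :=
  (posOrient u v w ∧ posOrient u w z) ∨ (posOrient z w v ∧ posOrient z v u)

/-- Two hyperbolic elements `a, b` are *in the same direction*: their repelling/attracting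
fixed points on the boundary circle (identified with the eigenlines of the corresponding
eigenvectors) are cyclically ordered as `(x_a⁻, x_a⁺, x_b⁺, x_b⁻)`. -/
def SameDirection (a b : SL(2, ℝ)) : Prop :=
  ∃ (uaP uaM ubP ubM : Fin 2 → ℝ) (αa βa αb βb : ℝ),
    uaP ≠ 0 ∧ uaM ≠ 0 ∧ ubP ≠ 0 ∧ ubM ≠ 0 ∧
    (a : Matrix (Fin 2) (Fin 2) ℝ) *ᵥ uaP = αa • uaP ∧ 1 < |αa| ∧
    (a : Matrix (Fin 2) (Fin 2) ℝ) *ᵥ uaM = βa • uaM ∧ |βa| < 1 ∧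
    (b : Matrix (Fin 2) (Fin 2) ℝ) *ᵥ ubP = αb • ubP ∧ 1 < |αb| ∧
    (b : Matrix (Fin 2) (Fin 2) ℝ) *ᵥ ubM = βb • ubM ∧ |βb| < 1 ∧
    cyc4 uaM uaP ubP ubM

/-!
Conjugating `g` into the diagonal form `diag(λ, λ⁻¹)`, whose axis is the imaginary axis, gives
`τ_g = 2 |log λ|`, i.e. `2 cosh (τ_g / 2) = |tr g|`.

The upper bound is the triangle inequality: for `p` on the axis of `a` and `q` on that of `b`,
`d(ab q, q) ≤ d(ab q, a p) + d(a p, p) + d(p, q)` and `d(ab q, a p) = d(b q, p) ≤ τ_b + d(q, p)`.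

For the lower bound, expand `tr (ab)` in eigenbases `u, v` of `a` and `x, y` of `b`. With
`λ = λ_a λ_b` one gets `D² (λ tr (ab) - λ² - 1) = Q D (λ_a² - 1)(λ_b² - 1)` where `Q / D` is a
cross-ratio of the four fixed points; it is positive exactly because they are cyclically ordered
as `(x_a⁻, x_a⁺, x_b⁺, x_b⁻)`. Hence `|tr (ab)| > |λ + λ⁻¹| = 2 cosh ((τ_a + τ_b) / 2)`.
-/

lemma transLen_le_dist (g : SL(2, ℝ)) (z : ℍ) : transLen g ≤ dist (g • z) z :=
  ciInf_le ⟨0, by rintro _ ⟨w, rfl⟩; exact dist_nonneg⟩ z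

lemma transLen_nonneg (g : SL(2, ℝ)) : 0 ≤ transLen g :=
  le_ciInf fun _ => dist_nonneg

lemma dist_conj_smul (g h : SL(2, ℝ)) (w : ℍ) :
    dist ((g * h * g⁻¹) • g • w) (g • w) = dist (h • w) w := by
  rw [mul_smul, mul_smul, inv_smul_smul, dist_smul]

lemma transLen_conj (g h : SL(2, ℝ)) : transLen (g * h * g⁻¹) = transLen h := by
  rw [transLen, ← (MulAction.toPerm g).iInf_comp]
  exact iInf_congr (dist_conj_smul g h)

lemma smul_mem_axisSet_conj (g : SL(2, ℝ)) {h : SL(2, ℝ)} {w : ℍ} (hw : w ∈ axisSet h) :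
    g • w ∈ axisSet (g * h * g⁻¹) :=
  (dist_conj_smul g h w).trans (hw.trans (transLen_conj g h).symm)

lemma transLen_mul_le_of_mem_axisSet {g h : SL(2, ℝ)} {p q : ℍ} (hp : p ∈ axisSet g)
    (hq : q ∈ axisSet h) : transLen (g * h) ≤ transLen g + transLen h + 2 * dist p q :=
  calc transLen (g * h)
      ≤ dist ((g * h) • q) (g • p) + dist (g • p) p + dist p q :=
        (transLen_le_dist _ q).trans (dist_triangle4 _ _ _ _)
    _ = dist (h • q) p + transLen g + dist p q := by rw [mul_smul, dist_smul, hp]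
    _ ≤ dist (h • q) q + dist q p + transLen g + dist p q := by gcongr; exact dist_triangle ..
    _ = transLen g + transLen h + 2 * dist p q := by rw [hq, dist_comm q p]; ring

lemma transLen_mul_le {g h : SL(2, ℝ)} (hg : (axisSet g).Nonempty) (hh : (axisSet h).Nonempty) :
    transLen (g * h) ≤ transLen g + transLen h + 2 * axisDist g h := by
  have := hg.to_subtype
  have := hh.to_subtype
  have : (transLen (g * h) - transLen g - transLen h) / 2 ≤ axisDist g h :=
    le_ciInf fun p => le_ciInf fun q => by linarith [transLen_mul_le_of_mem_axisSet p.2 q.2]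
  linarith

noncomputable def diagSL (l : ℝ) (hl : l ≠ 0) : SL(2, ℝ) :=
  ⟨!![l, 0; 0, l⁻¹], by simp [hl]⟩

section Diagonal

variable {l : ℝ} (hl : l ≠ 0)

lemma coe_diagSL_smul (z : ℍ) : ((diagSL l hl • z : ℍ) : ℂ) = (l ^ 2 : ℝ) * (z : ℂ) := by
  rw [coe_specialLinearGroup_apply]
  simp [diagSL, div_eq_mul_inv, sq, mul_right_comm]

lemma re_diagSL_smul (z : ℍ) : (diagSL l hl • z).re = l ^ 2 * z.re := by
  simp [← coe_re, coe_diagSL_smul, -Complex.ofReal_pow]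

lemma im_diagSL_smul (z : ℍ) : (diagSL l hl • z).im = l ^ 2 * z.im := by
  simp [← coe_im, coe_diagSL_smul, -Complex.ofReal_pow]

lemma log_im_diagSL_smul (z : ℍ) :
    Real.log (diagSL l hl • z).im = 2 * Real.log l + Real.log z.im := by
  rw [im_diagSL_smul, Real.log_mul (by positivity) z.im_ne_zero, Real.log_pow]
  push_cast; ring

lemma dist_diagSL_smul_I : dist (diagSL l hl • I) I = 2 * |Real.log l| := by
  rw [dist_of_re_eq (by simp [re_diagSL_smul]), log_im_diagSL_smul, Real.dist_eq]
  simp [abs_mul]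

lemma dist_diagSL_smul_I_le (z : ℍ) : dist (diagSL l hl • I) I ≤ dist (diagSL l hl • z) z := by
  have := dist_log_im_le (diagSL l hl • z) z
  rw [log_im_diagSL_smul, Real.dist_eq] at this
  simpa [dist_diagSL_smul_I, abs_mul] using this

lemma I_mem_axisSet_diagSL : I ∈ axisSet (diagSL l hl) :=
  le_antisymm (le_ciInf (dist_diagSL_smul_I_le hl)) (transLen_le_dist _ I)

lemma transLen_diagSL : transLen (diagSL l hl) = 2 * |Real.log l| :=
  (I_mem_axisSet_diagSL hl).symm.trans (dist_diagSL_smul_I hl)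

end Diagonal

lemma exists_mulVec_eq_smul_iff {K : Type*} [Field K] (M : Matrix (Fin 2) (Fin 2) K) (α : K) :
    (∃ u ≠ 0, M *ᵥ u = α • u) ↔ α ^ 2 - M.trace * α + M.det = 0 := by
  have hdet : (M - α • 1).det = α ^ 2 - M.trace * α + M.det := by
    rw [det_fin_two, det_fin_two, trace_fin_two]
    simp only [Matrix.sub_apply, Matrix.smul_apply, one_apply_eq, one_apply_ne zero_ne_one,
      one_apply_ne one_ne_zero, smul_eq_mul]
    ring
  rw [← hdet, ← exists_mulVec_eq_zero_iff]
  simp only [sub_mulVec, smul_mulVec, one_mulVec, sub_eq_zero]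

lemma add_eq_and_mul_eq_of_sq_sub_mul_add_eq_zero {K : Type*} [Field K] {t c α β : K}
    (hα : α ^ 2 - t * α + c = 0) (hβ : β ^ 2 - t * β + c = 0) (hαβ : α ≠ β) :
    α + β = t ∧ α * β = c := by
  have hsum : α + β = t := by
    have : (α - β) * (α + β - t) = 0 := by linear_combination hα - hβ
    simpa [sub_eq_zero, hαβ] using this
  exact ⟨hsum, by linear_combination hsum * α - hα⟩

lemma det2_smul_eq_add (u v x : Fin 2 → ℝ) : det2 u v • x = det2 x v • u + det2 u x • v := by
  ext i
  fin_cases i <;>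
    simp only [det2, Pi.add_apply, Pi.smul_apply, smul_eq_mul, Fin.zero_eta, Fin.mk_one] <;> ring

lemma trace_mul_det2 (M : Matrix (Fin 2) (Fin 2) ℝ) (x y : Fin 2 → ℝ) :
    M.trace * det2 x y = det2 (M *ᵥ x) y + det2 x (M *ᵥ y) := by
  simp only [trace_fin_two, det2, mulVec, dotProduct, Fin.sum_univ_two]
  ring

lemma det2_ne_zero_of_mulVec_eq_smul {M : Matrix (Fin 2) (Fin 2) ℝ} {u v : Fin 2 → ℝ} {α β : ℝ}
    (hu : u ≠ 0) (hv : v ≠ 0) (hMu : M *ᵥ u = α • u) (hMv : M *ᵥ v = β • v) (hαβ : α ≠ β) :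
    det2 u v ≠ 0 := by
  intro h
  have hpar : ∀ i, v i • u = u i • v := by
    intro i; ext j
    fin_cases i <;> fin_cases j <;>
      simp only [det2, Pi.smul_apply, smul_eq_mul, Fin.zero_eta, Fin.mk_one] at h ⊢ <;> linarith
  refine hu (funext fun i => ?_)
  have hMpar := congrArg (M *ᵥ ·) (hpar i)
  rw [mulVec_smul, mulVec_smul, hMu, hMv, smul_comm, hpar i, smul_smul, smul_smul] at hMpar
  have : (u i * (α - β)) • v = 0 := by rw [mul_sub, sub_smul, mul_comm, hMpar, sub_self]
  simpa [hv, sub_eq_zero, hαβ] using this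

lemma exists_eq_conj_diagSL {g : SL(2, ℝ)} {u v : Fin 2 → ℝ} {α : ℝ} (hα : α ≠ 0)
    (hgu : (g : Matrix (Fin 2) (Fin 2) ℝ) *ᵥ u = α • u)
    (hgv : (g : Matrix (Fin 2) (Fin 2) ℝ) *ᵥ v = α⁻¹ • v) (huv : det2 u v ≠ 0) :
    ∃ P : SL(2, ℝ), g = P * diagSL α hα * P⁻¹ := by
  let P : SL(2, ℝ) := ⟨Matrix.of fun i => ![u i, v i / det2 u v], by
    rw [det_fin_two]
    simp only [of_apply, cons_val_zero, cons_val_one, cons_val_fin_one]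
    field_simp
    unfold det2
    ring⟩
  refine ⟨P, eq_mul_inv_of_mul_eq (Subtype.ext ?_)⟩
  have hu i := congrFun hgu i
  have hv i := congrFun hgv i
  simp only [mulVec, dotProduct, Fin.sum_univ_two, Pi.smul_apply, smul_eq_mul] at hu hv
  show (g : Matrix (Fin 2) (Fin 2) ℝ) * P = P * diagSL α hα
  ext i j
  fin_cases j <;>
    simp only [P, diagSL, mul_apply, Fin.sum_univ_two, of_apply, cons_val', cons_val_zero,
      cons_val_one, cons_val_fin_one, Fin.zero_eta, Fin.mk_one, mul_zero, add_zero, zero_add]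
  · linear_combination hu i
  · linear_combination hv i / det2 u v

lemma two_mul_cosh_log_abs {x : ℝ} (hx : x ≠ 0) : 2 * Real.cosh (Real.log |x|) = |x + x⁻¹| := by
  have hsign : 0 ≤ x ∧ 0 ≤ x⁻¹ ∨ x ≤ 0 ∧ x⁻¹ ≤ 0 := by
    rcases le_total 0 x with h | h
    exacts [Or.inl ⟨h, inv_nonneg.mpr h⟩, Or.inr ⟨h, inv_nonpos.mpr h⟩]
  rw [Real.cosh_log (abs_pos.mpr hx), ← abs_inv, (abs_add_eq_add_abs_iff x x⁻¹).mpr hsign]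
  ring

section Eigen

variable {g : SL(2, ℝ)} {u v : Fin 2 → ℝ} {α β : ℝ} (hu : u ≠ 0) (hv : v ≠ 0)
  (hgu : (g : Matrix (Fin 2) (Fin 2) ℝ) *ᵥ u = α • u)
  (hgv : (g : Matrix (Fin 2) (Fin 2) ℝ) *ᵥ v = β • v) (hαβ : α ≠ β)
include hu hv hgu hgv hαβ

lemma add_eq_trace_and_mul_eq_one_of_eigen :
    α + β = (g : Matrix (Fin 2) (Fin 2) ℝ).trace ∧ α * β = 1 := by
  have hroot {γ : ℝ} {w : Fin 2 → ℝ} (hw : w ≠ 0)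
      (hgw : (g : Matrix (Fin 2) (Fin 2) ℝ) *ᵥ w = γ • w) :
      γ ^ 2 - (g : Matrix (Fin 2) (Fin 2) ℝ).trace * γ + 1 = 0 := by
    simpa using (exists_mulVec_eq_smul_iff _ γ).mp ⟨w, hw, hgw⟩
  exact add_eq_and_mul_eq_of_sq_sub_mul_add_eq_zero (hroot hu hgu) (hroot hv hgv) hαβ

lemma exists_eq_conj_diagSL_of_eigen :
    ∃ (hα : α ≠ 0) (P : SL(2, ℝ)), g = P * diagSL α hα * P⁻¹ := by
  have hmul := (add_eq_trace_and_mul_eq_one_of_eigen hu hv hgu hgv hαβ).2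
  have hα : α ≠ 0 := left_ne_zero_of_mul_eq_one hmul
  obtain rfl : β = α⁻¹ := eq_inv_of_mul_eq_one_right hmul
  exact ⟨hα, exists_eq_conj_diagSL hα hgu hgv (det2_ne_zero_of_mulVec_eq_smul hu hv hgu hgv hαβ)⟩

lemma transLen_eq_of_eigen : transLen g = 2 * |Real.log α| := by
  obtain ⟨hα, P, rfl⟩ := exists_eq_conj_diagSL_of_eigen hu hv hgu hgv hαβ
  rw [transLen_conj, transLen_diagSL]

lemma axisSet_nonempty_of_eigen : (axisSet g).Nonempty := by
  obtain ⟨hα, P, rfl⟩ := exists_eq_conj_diagSL_of_eigen hu hv hgu hgv hαβ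
  exact ⟨P • I, smul_mem_axisSet_conj P (I_mem_axisSet_diagSL hα)⟩

lemma two_mul_cosh_half_transLen_of_eigen :
    2 * Real.cosh (transLen g / 2) = |(g : Matrix (Fin 2) (Fin 2) ℝ).trace| := by
  obtain ⟨htr, hmul⟩ := add_eq_trace_and_mul_eq_one_of_eigen hu hv hgu hgv hαβ
  rw [transLen_eq_of_eigen hu hv hgu hgv hαβ, mul_div_cancel_left₀ _ two_ne_zero,
    Real.cosh_abs, ← Real.log_abs, two_mul_cosh_log_abs (left_ne_zero_of_mul_eq_one hmul),
    ← eq_inv_of_mul_eq_one_right hmul, htr]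

end Eigen

lemma IsHyperbolic.exists_eigen {g : SL(2, ℝ)} (hg : IsHyperbolic g) :
    ∃ (u v : Fin 2 → ℝ) (α β : ℝ), u ≠ 0 ∧ v ≠ 0 ∧
      (g : Matrix (Fin 2) (Fin 2) ℝ) *ᵥ u = α • u ∧
      (g : Matrix (Fin 2) (Fin 2) ℝ) *ᵥ v = β • v ∧ α ≠ β := by
  set t := (g : Matrix (Fin 2) (Fin 2) ℝ).trace
  have hs : 0 < t ^ 2 - 4 := by
    have ht : 2 < |t| := hg
    nlinarith [sq_abs t]
  have hroot (s : ℝ) (hst : s ^ 2 = t ^ 2 - 4) :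
      ∃ w ≠ 0, (g : Matrix (Fin 2) (Fin 2) ℝ) *ᵥ w = ((t + s) / 2) • w := by
    rw [exists_mulVec_eq_smul_iff, g.det_coe]
    linear_combination hst / 4
  obtain ⟨u, hu, hgu⟩ := hroot √(t ^ 2 - 4) (Real.sq_sqrt hs.le)
  obtain ⟨v, hv, hgv⟩ := hroot (-√(t ^ 2 - 4)) (by rw [neg_sq, Real.sq_sqrt hs.le])
  refine ⟨u, v, _, _, hu, hv, hgu, hgv, ?_⟩
  have := Real.sqrt_pos.mpr hs
  intro h; linarith

lemma two_mul_abs_lt_transLen_of_two_mul_cosh_lt {g : SL(2, ℝ)} {t : ℝ}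
    (h : 2 * Real.cosh t < |(g : Matrix (Fin 2) (Fin 2) ℝ).trace|) : 2 * |t| < transLen g := by
  have hg : IsHyperbolic g := show 2 < |_| by linarith [Real.one_le_cosh t]
  obtain ⟨u, v, α, β, hu, hv, hgu, hgv, hαβ⟩ := hg.exists_eigen
  rw [← two_mul_cosh_half_transLen_of_eigen hu hv hgu hgv hαβ] at h
  have := Real.cosh_lt_cosh.mp (lt_of_mul_lt_mul_left h zero_le_two)
  rw [abs_of_nonneg (div_nonneg (transLen_nonneg g) zero_le_two)] at this
  linarith

lemma cyc4.det2_mul_lt_zero {p q r s : Fin 2 → ℝ} (h : cyc4 p q r s) :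
    det2 p q * det2 q r * det2 r s * det2 s p < 0 := by
  rcases h with ⟨h1, h2⟩ | ⟨h1, h2⟩ <;> unfold posOrient at h1 h2
  · have key : det2 p q * det2 q r * det2 r s * det2 s p * det2 p r ^ 2 =
        -(det2 p q * det2 q r * det2 r p * (det2 p r * det2 r s * det2 s p)) := by
      unfold det2; ring
    nlinarith [mul_pos h1 h2, sq_nonneg (det2 p r)]
  · have key : det2 p q * det2 q r * det2 r s * det2 s p * det2 q s ^ 2 =
        -(det2 s r * det2 r q * det2 q s * (det2 s q * det2 q p * det2 p s)) := by
      unfold det2; ring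
    nlinarith [mul_pos h1 h2, sq_nonneg (det2 q s)]

lemma abs_add_inv_lt_abs_of_sq_add_one_lt_mul {l t : ℝ} (h : l ^ 2 + 1 < t * l) :
    |l + l⁻¹| < |t| := by
  have hl : l ≠ 0 := by rintro rfl; norm_num at h
  have hmul : |l| * |l + l⁻¹| = l ^ 2 + 1 := by
    rw [← abs_mul, mul_add, mul_inv_cancel₀ hl, ← sq, abs_of_pos (by positivity)]
  refine lt_of_mul_lt_mul_left ?_ (abs_nonneg l)
  rw [hmul, ← abs_mul, mul_comm]
  exact h.trans_le (le_abs_self _)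

section TraceFormula

variable {A B : Matrix (Fin 2) (Fin 2) ℝ} {u v x y : Fin 2 → ℝ} {α β γ δ : ℝ}
  (hu : A *ᵥ u = α • u) (hv : A *ᵥ v = β • v) (hx : B *ᵥ x = γ • x) (hy : B *ᵥ y = δ • y)
include hu hv

lemma det2_smul_mulVec_of_eigen (x : Fin 2 → ℝ) :
    det2 u v • (A *ᵥ x) = (α * det2 x v) • u + (β * det2 u x) • v := by
  rw [← mulVec_smul, det2_smul_eq_add, mulVec_add, mulVec_smul, mulVec_smul, hu, hv, smul_smul,
    smul_smul, mul_comm α, mul_comm β]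

include hx hy

lemma trace_mul_mul_det2_mul_det2 :
    (A * B).trace * (det2 u v * det2 x y) =
      det2 x v * det2 u y * (α * γ + β * δ) - det2 u x * det2 y v * (α * δ + β * γ) := by
  have hAx := congrArg (det2 · y) (det2_smul_mulVec_of_eigen hu hv x)
  have hAy := congrArg (det2 x ·) (det2_smul_mulVec_of_eigen hu hv y)
  have htr := trace_mul_det2 (A * B) x y
  rw [← mulVec_mulVec, ← mulVec_mulVec, hx, hy, mulVec_smul, mulVec_smul] at htr
  simp only [det2, Pi.add_apply, Pi.smul_apply, smul_eq_mul] at hAx hAy htr ⊢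
  linear_combination (u 0 * v 1 - u 1 * v 0) * htr + γ * hAx + δ * hAy

lemma sq_add_one_lt_trace_mul_mul_of_cyc4 (hαβ : α * β = 1) (hγδ : γ * δ = 1)
    (hα : 1 < |α|) (hγ : 1 < |γ|) (hcyc : cyc4 v u x y) :
    (α * γ) ^ 2 + 1 < (A * B).trace * (α * γ) := by
  set D := det2 u v * det2 x y
  set Q := det2 u x * det2 y v
  have htr := trace_mul_mul_det2_mul_det2 hu hv hx hy
  have hpl : det2 x v * det2 u y = D + Q := by unfold D Q det2; ring
  have hQD : 0 < Q * D := by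
    have e : Q * D = -(det2 v u * det2 u x * det2 x y * det2 y v) := by unfold Q D det2; ring
    linarith [hcyc.det2_mul_lt_zero]
  have key : D ^ 2 * ((A * B).trace * (α * γ) - (α * γ) ^ 2 - 1) =
      Q * D * ((α ^ 2 - 1) * (γ ^ 2 - 1)) := by
    linear_combination (D * (α * γ)) * htr + (D * (α * γ) * (α * γ + β * δ)) * hpl
      + (D ^ 2 * γ * δ + D * Q * (γ * δ - γ ^ 2)) * hαβ + (D ^ 2 + D * Q * (1 - α ^ 2)) * hγδ
  have hpos : 0 < D ^ 2 * ((A * B).trace * (α * γ) - (α * γ) ^ 2 - 1) := by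
    rw [key]
    have := (one_lt_sq_iff_one_lt_abs α).mpr hα
    have := (one_lt_sq_iff_one_lt_abs γ).mpr hγ
    exact mul_pos hQD (mul_pos (by linarith) (by linarith))
  linarith [pos_of_mul_pos_right hpos (sq_nonneg D)]

end TraceFormula

theorem transLen_mul_bounds_general (a b : SL(2, ℝ)) (hdir : SameDirection a b)
    (d : ℝ) (hd : d = axisDist a b) :
    transLen a + transLen b < transLen (a * b) ∧
      transLen (a * b) ≤ transLen a + transLen b + 2 * d := by
  obtain ⟨u, v, x, y, α, β, γ, δ, hu, hv, hx, hy, hau, hα, hav, hβ, hbx, hγ, hby, hδ, hcyc⟩ :=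
    hdir
  have hαβ : α ≠ β := by rintro rfl; linarith
  have hγδ : γ ≠ δ := by rintro rfl; linarith
  refine ⟨?_, hd ▸ transLen_mul_le (axisSet_nonempty_of_eigen hu hv hau hav hαβ)
    (axisSet_nonempty_of_eigen hx hy hbx hby hγδ)⟩
  have htrace := abs_add_inv_lt_abs_of_sq_add_one_lt_mul <| sq_add_one_lt_trace_mul_mul_of_cyc4
    hau hav hbx hby (add_eq_trace_and_mul_eq_one_of_eigen hu hv hau hav hαβ).2
    (add_eq_trace_and_mul_eq_one_of_eigen hx hy hbx hby hγδ).2 hα hγ hcyc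
  rw [← two_mul_cosh_log_abs (mul_ne_zero (abs_pos.mp (one_pos.trans hα))
    (abs_pos.mp (one_pos.trans hγ)))] at htrace
  have hlog := two_mul_abs_lt_transLen_of_two_mul_cosh_lt (g := a * b) htrace
  rw [abs_mul, Real.log_mul (by positivity) (by positivity)] at hlog
  rw [transLen_eq_of_eigen hu hv hau hav hαβ, transLen_eq_of_eigen hx hy hbx hby hγδ,
    ← Real.log_abs α, ← Real.log_abs γ, abs_of_pos (Real.log_pos hα),
    abs_of_pos (Real.log_pos hγ)]
  linarith [le_abs_self (Real.log |α| + Real.log |γ|)]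

/-- For two hyperbolic isometries with disjoint axes in the same direction, at distance `d`:
`τ_a + τ_b < τ_{ab} ≤ τ_a + τ_b + 2d`. -/
theorem transLen_mul_bounds (a b : SL(2, ℝ)) (ha : IsHyperbolic a) (hb : IsHyperbolic b)
    (hdisj : axisSet a ∩ axisSet b = ∅) (hdir : SameDirection a b)
    (d : ℝ) (hd : d = axisDist a b) (hd0 : 0 < d) :
    transLen a + transLen b < transLen (a * b) ∧
      transLen (a * b) ≤ transLen a + transLen b + 2 * d :=
  transLen_mul_bounds_general a b hdir d hd
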